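/- On the weighted projective space $P=P(3,2,1)$ (so $k=6$), the sheaf $O_P(-5)$ is $0$-wregular, but its restriction $O_{H_2}(-5)$ to the coordinate hyperplane $H_2=\{x_2=0\}\cong P(3,2)$ is not $0$-wregular. -/

import Mathlib

/-!
STATEMENT 8 (Example `ex:badwreg`).

On the weighted projective space `P = P(3,2,1)` (so `k = 6`), the sheaf `O_P(-5)`
is `0`-wregular, but its restriction `O_{H_2}(-5)` to the coordinate hyperplane
`H_2 = {x_2 = 0} ≅ P(3,2)` is not `0`-wregular.

The cohomology of the line bundles `O(d)` on a weighted projective space with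
weights `w` is the concrete function `lineH` below, so the sheaf `O(e)` has
`dim_K H^i(O(e)(t)) = lineH w i (e + t)`.
-/

/-- `wh0 w d` is the dimension of the degree-`d` graded piece of
`K[x_0, …, x_{N-1}]` with `deg x_j = w j`, i.e. `dim_K H^0(P, O_P(d))` on the
weighted projective space `P = P(w)` of dimension `N - 1`: the number of
monomials of weighted degree `d`. -/
noncomputable def wh0 {N : ℕ} (w : Fin N → ℕ) (d : ℤ) : ℕ :=
  Set.ncard {v : Fin N → ℕ | ∑ j, (v j : ℤ) * (w j : ℤ) = d}

/-- `lineH w i d = dim_K H^i(P, O_P(d))` on the weighted projective space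
`P = P(w)` of dimension `N - 1`:  `H^0` is the space of weighted-degree-`d`
polynomials, the intermediate cohomology of a line bundle vanishes (`P` is
arithmetically Cohen–Macaulay), and `H^{N-1}(O_P(d)) ≅ H^0(O_P(-d - w̄))^∨` by
Serre duality, `ω_P = O_P(-w̄)` with `w̄ = ∑ j, w j`. -/
noncomputable def lineH {N : ℕ} (w : Fin N → ℕ) (i : ℕ) (d : ℤ) : ℕ :=
  if i = 0 then wh0 w d
  else if i = N - 1 then wh0 w (-d - ∑ j, (w j : ℤ)) else 0

/-- `wbar w i = w̄_i`, the sum of the `i + 1` largest weights (the weights are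
listed in decreasing order). -/
def wbar {N : ℕ} (w : Fin N → ℕ) (i : ℕ) : ℤ :=
  ∑ j ∈ Finset.univ.filter (fun j : Fin N => (j : ℕ) ≤ i), (w j : ℤ)

/-- `wlcm w = k = lcm(w 0, …, w (N-1))`. -/
def wlcm {N : ℕ} (w : Fin N → ℕ) : ℕ :=
  Finset.univ.lcm w

/-- `m`-semiwregularity of a coherent sheaf `F` on the weighted projective space
`P = P(w)` of dimension `N - 1`, in terms of `h i t = dim_K H^i(P, F(t))`:
`H^i(F(t + (m+1)k - w̄_i)) = 0` for all `i = 1, …, N-1` and all `t ≥ 0`. -/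
def WSemiReg {N : ℕ} (w : Fin N → ℕ) (h : ℕ → ℤ → ℕ) (m : ℤ) : Prop :=
  ∀ i ∈ Finset.Icc 1 (N - 1), ∀ t : ℤ, 0 ≤ t →
    h i (t + (m + 1) * (wlcm w : ℤ) - wbar w i) = 0

/-- `m`-wregularity: `m`-semiwregularity together with `H^0(F((m+1)k)) ≠ 0`. -/
def WReg {N : ℕ} (w : Fin N → ℕ) (h : ℕ → ℤ → ℕ) (m : ℤ) : Prop :=
  WSemiReg w h m ∧ h 0 ((m + 1) * (wlcm w : ℤ)) ≠ 0

/-!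
On `P(3,2,1)` the only cohomology of a line bundle that `0`-wregularity can see besides `H^0`
is the top one, which by Serre duality is `H^0(O(-e - t - k))` and vanishes as soon as
`-e < k`; for `e = -5` and `k = 6` this holds, and `H^0(O(1)) ∋ x_2` is nonzero. On `H_2 ≅ P(3,2)`
the lcm is still `6`, but now `H^0(O(1)) = 0` because `1` is not of the form `3a + 2b`.
-/

section WeightedProjectiveSpace

variable {N : ℕ} (w : Fin N → ℕ)

lemma wh0_eq_zero_of_neg {d : ℤ} (hd : d < 0) : wh0 w d = 0 := by
  have hempty : {v : Fin N → ℕ | ∑ j, (v j : ℤ) * (w j : ℤ) = d} = ∅ :=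
    Set.eq_empty_of_forall_notMem fun v (hv : ∑ j, (v j : ℤ) * (w j : ℤ) = d) => by
      have : (0 : ℤ) ≤ ∑ j, (v j : ℤ) * (w j : ℤ) := by positivity
      omega
  rw [wh0, hempty, Set.ncard_empty]

/-- With positive weights every exponent of a monomial of degree `d` is at most `d`. -/
lemma finite_setOf_weightedDegree_eq (hw : ∀ j, 0 < w j) (d : ℤ) :
    {v : Fin N → ℕ | ∑ j, (v j : ℤ) * (w j : ℤ) = d}.Finite := by
  refine (Set.finite_Iic fun _ => d.toNat).subset fun v (hv : ∑ j, (v j : ℤ) * (w j : ℤ) = d) j => ?_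
  have hj : (v j : ℤ) * (w j : ℤ) ≤ d :=
    hv ▸ Finset.single_le_sum (f := fun i => (v i : ℤ) * (w i : ℤ))
      (fun i _ => by positivity) (Finset.mem_univ j)
  have : (v j : ℤ) ≤ v j * w j := le_mul_of_one_le_right (by positivity) (by exact_mod_cast hw j)
  show v j ≤ d.toNat
  omega

lemma wh0_eq_zero_iff (hw : ∀ j, 0 < w j) (d : ℤ) :
    wh0 w d = 0 ↔ ¬ ∃ v : Fin N → ℕ, ∑ j, (v j : ℤ) * (w j : ℤ) = d := by
  rw [wh0, Set.ncard_eq_zero (finite_setOf_weightedDegree_eq w hw d), Set.eq_empty_iff_forall_notMem]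
  simp

lemma wbar_sub_one : wbar w (N - 1) = ∑ j, (w j : ℤ) := by
  rw [wbar, Finset.filter_true_of_mem fun j _ => by omega]

lemma wSemiReg_lineH_of_neg_lt {e m : ℤ} (h : -e < (m + 1) * wlcm w) :
    WSemiReg w (fun i t => lineH w i (e + t)) m := by
  intro i hi t ht
  rw [Finset.mem_Icc] at hi
  simp only [lineH, if_neg (show i ≠ 0 by omega)]
  split_ifs with htop
  · subst htop
    rw [wbar_sub_one]
    exact wh0_eq_zero_of_neg w (by linarith)
  · rfl

end WeightedProjectiveSpace

theorem example_P321_wregular_restriction_not_wregular :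
    -- `O_P(-5)` is `0`-wregular on `P(3,2,1)` ...
    WReg ![3, 2, 1] (fun i t => lineH ![3, 2, 1] i (-5 + t)) 0 ∧
    -- ... but `O_{H_2}(-5)` is not `0`-wregular on `H_2 ≅ P(3,2)`.
    ¬ WReg ![3, 2] (fun i t => lineH ![3, 2] i (-5 + t)) 0 := by
  have hk₃ : wlcm ![3, 2, 1] = 6 := by decide
  have hk₂ : wlcm ![3, 2] = 6 := by decide
  have hx₂ : wh0 ![3, 2, 1] 1 ≠ 0 := by
    rw [Ne, wh0_eq_zero_iff _ (by decide), not_not]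
    exact ⟨![0, 0, 1], by simp [Fin.sum_univ_three]⟩
  have hno_deg_one : wh0 ![3, 2] 1 = 0 := by
    rw [wh0_eq_zero_iff _ (by decide)]
    rintro ⟨v, hv⟩
    simp only [Fin.sum_univ_two, Matrix.cons_val_zero, Matrix.cons_val_one] at hv
    omega
  refine ⟨⟨wSemiReg_lineH_of_neg_lt _ (by rw [hk₃]; norm_num), ?_⟩, fun ⟨_, hH0⟩ => hH0 ?_⟩
  · simpa [lineH, hk₃] using hx₂
  · simpa [lineH, hk₂] using hno_deg_one
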